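/- arXiv:2005.10122 — 2 statements merged into one kernel-verified Lean document; each statement's English description precedes it below -/
import Mathlib

section
/- Let M ∈ F and let (P, Q) be a Mano decomposition of M with factor C. Then the matrices M(x₁), M(x₂), P(x₁), P(x₂) are all nonzero, and for any choice, for i = 1, 2, of a nonzero column (p_i, q_i) of P(x_i) and of a nonzero column (f_i, g_i) of M(x_i), one has: (p₁q₂, p₂q₁) ≠ (0, 0), and p₁q₂·f₂g₁ = f₁g₂·p₂q₁ (i.e. the projective ratios (p₁q₂ : p₂q₁) and (f₁g₂ : f₂g₁) coincide in P¹(ℂ)). -/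
open Matrix

/-- `a ≡ b (mod q^ℤ)`, i.e. `a/b ∈ q^ℤ`. -/
def qCong (q a b : ℂ) : Prop := ∃ m : ℤ, a = q ^ m * b

/-- Entrywise holomorphy on `ℂ ∖ {0}` of a matrix-valued function. -/
def MatHolo (M : ℂ → Matrix (Fin 2) (Fin 2) ℂ) : Prop :=
  ∀ i j : Fin 2, ∀ x : ℂ, x ≠ 0 → DifferentiableAt ℂ (fun y => M y i j) x

/-- The Jimbo–Sakai monodromy space `F`: `2×2` matrices `M` holomorphic on `ℂ*` with
`x² M(qx) S = R M(x)`, `det M ≢ 0`, and `det M(x_i) = 0` for `i = 1, 2, 3, 4`. -/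
def FJS (q : ℂ) (ρ σv : Fin 2 → ℂ) (xs : Fin 4 → ℂ) :
    Set (ℂ → Matrix (Fin 2) (Fin 2) ℂ) :=
  {M | MatHolo M ∧
    (∀ x : ℂ, x ≠ 0 →
      (x ^ 2) • (M (q * x) * Matrix.diagonal σv) = Matrix.diagonal ρ * M x) ∧
    (∃ x : ℂ, x ≠ 0 ∧ (M x).det ≠ 0) ∧
    ∀ k : Fin 4, (M (xs k)).det = 0}

/-- `GL₂(O(ℂ*))`: matrices holomorphic on `ℂ*` and invertible at every `x ≠ 0`. -/
def GLO (Λ : ℂ → Matrix (Fin 2) (Fin 2) ℂ) : Prop :=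
  MatHolo Λ ∧ ∀ x : ℂ, x ≠ 0 → IsUnit (Λ x).det

/-- A Mano decomposition of `M` with factor `C ∈ GL₂(ℂ)`: `M = P Q`,
`x P(qx) C = R P(x)`, `det P ≢ 0` and `det P(x₁) = det P(x₂) = 0`. -/
def Mano (q : ℂ) (ρ : Fin 2 → ℂ) (x1 x2 : ℂ) (M : ℂ → Matrix (Fin 2) (Fin 2) ℂ)
    (C : Matrix (Fin 2) (Fin 2) ℂ) (P Q : ℂ → Matrix (Fin 2) (Fin 2) ℂ) : Prop :=
  IsUnit C.det ∧ MatHolo P ∧ MatHolo Q ∧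
  (∀ x : ℂ, x ≠ 0 → M x = P x * Q x) ∧
  (∀ x : ℂ, x ≠ 0 → x • (P (q * x) * C) = Matrix.diagonal ρ * P x) ∧
  (∃ x : ℂ, x ≠ 0 ∧ (P x).det ≠ 0) ∧
  (P x1).det = 0 ∧ (P x2).det = 0

/-- `(f, g)` is a nonzero column of the `2×2` matrix `A`. -/
def IsNzCol (A : Matrix (Fin 2) (Fin 2) ℂ) (f g : ℂ) : Prop :=
  ∃ j : Fin 2, f = A 0 j ∧ g = A 1 j ∧ ¬(f = 0 ∧ g = 0)

/-!
The determinants of `M` and `P` are theta functions of degree `4` and `2` on `ℂ*`, i.e. solutions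
of `x ^ k u(qx) = c u(x)`. Such a function that does not vanish identically has at most `k` zeros
modulo `q^ℤ`, counted with multiplicity: dividing by `(x/a; q)_∞ (qa/x; q)_∞`, which has simple
zeros exactly on `a q^ℤ`, lowers the degree by one, and in degree zero a solution with a zero
vanishes, because it extends holomorphically over `0` or `∞`, where its zeros accumulate.
If `M(x_i) = 0` then `det M` would have a double zero at `x_i` besides its other three zeros, and
likewise for `P`. If a row of `P` vanished at `x₁` and `x₂`, splitting the row equation
`x r(qx) C = ρ r(x)` along the eigenvalues of `C` would give degree-one solutions with two zeros,
so the row, and with it `det P`, would vanish identically; this gives `(p₁q₂, p₂q₁) ≠ (0, 0)`.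
Finally, as `det P(x_i) = 0`, every column of `M(x_i) = P(x_i) Q(x_i)` is proportional to the
nonzero column `(p_i, q_i)` of `P(x_i)`.
-/

open Filter Topology Set

theorem iff_of_qCong {q : ℂ} (hq : q ≠ 0) {p : ℂ → Prop}
    (hp : ∀ z, z ≠ 0 → (p (q * z) ↔ p z)) {a x : ℂ} (ha : a ≠ 0) (h : qCong q x a) :
    p x ↔ p a := by
  obtain ⟨m, rfl⟩ := h
  induction m using Int.induction_on with
  | zero => simp
  | succ m ih =>
    rw [← ih, zpow_add_one₀ hq, mul_comm _ q, mul_assoc]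
    exact hp _ (mul_ne_zero (zpow_ne_zero _ hq) ha)
  | pred m ih =>
    rw [← ih, ← hp _ (mul_ne_zero (zpow_ne_zero _ hq) ha), ← mul_assoc, ← zpow_one_add₀ hq]
    ring_nf

structure IsQTheta (q : ℂ) (k : ℕ) (c : ℂ) (u : ℂ → ℂ) : Prop where
  differentiableOn : DifferentiableOn ℂ u {0}ᶜ
  pow_mul_apply : ∀ x, x ≠ 0 → x ^ k * u (q * x) = c * u x

namespace IsQTheta

variable {q c : ℂ} {k : ℕ} {u : ℂ → ℂ}

theorem differentiableAt (hu : IsQTheta q k c u) {x : ℂ} (hx : x ≠ 0) :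
    DifferentiableAt ℂ u x :=
  hu.differentiableOn.differentiableAt (isOpen_compl_singleton.mem_nhds hx)

theorem apply_mul_eq_zero_iff (hu : IsQTheta q k c u) (hc : c ≠ 0) {z : ℂ} (hz : z ≠ 0) :
    u (q * z) = 0 ↔ u z = 0 := by
  rw [← mul_eq_zero_iff_left (pow_ne_zero k hz), hu.pow_mul_apply z hz, mul_eq_zero_iff_left hc]

theorem apply_eq_zero_of_qCong (hu : IsQTheta q k c u) (hq : q ≠ 0) (hc : c ≠ 0) {a x : ℂ}
    (ha : a ≠ 0) (hx : qCong q x a) (h : u a = 0) : u x = 0 :=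
  (iff_of_qCong (p := (u · = 0)) hq (fun _ hz ↦ hu.apply_mul_eq_zero_iff hc hz) ha hx).2 h

/-- The product-rule term `k z ^ (k - 1) u (q z)` drops out because `u (q z) = 0`. -/
theorem pow_mul_deriv (hu : IsQTheta q k c u) (hq : q ≠ 0) {z : ℂ} (hz : z ≠ 0) (h : u z = 0) :
    z ^ k * q * deriv u (q * z) = c * deriv u z := by
  have hqz : u (q * z) = 0 := by
    simpa [h, hz] using hu.pow_mul_apply z hz
  have hL : HasDerivAt (fun x ↦ x ^ k * u (q * x))
      (k * z ^ (k - 1) * u (q * z) + z ^ k * (deriv u (q * z) * q)) z :=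
    (hasDerivAt_pow k z).mul ((hu.differentiableAt (mul_ne_zero hq hz)).hasDerivAt.comp z
      (by simpa using (hasDerivAt_id z).const_mul q))
  have hR : HasDerivAt (fun x ↦ x ^ k * u (q * x)) (c * deriv u z) z :=
    ((hu.differentiableAt hz).hasDerivAt.const_mul c).congr_of_eventuallyEq <|
      eventually_of_mem (isOpen_compl_singleton.mem_nhds hz) hu.pow_mul_apply
  rw [hR.unique hL, hqz]
  ring

theorem deriv_mul_eq_zero_iff (hu : IsQTheta q k c u) (hq : q ≠ 0) (hc : c ≠ 0) {z : ℂ}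
    (hz : z ≠ 0) (h : u z = 0) : deriv u (q * z) = 0 ↔ deriv u z = 0 := by
  rw [← mul_eq_zero_iff_left (mul_ne_zero (pow_ne_zero k hz) hq), hu.pow_mul_deriv hq hz h,
    mul_eq_zero_iff_left hc]

theorem deriv_ne_zero_of_qCong (hu : IsQTheta q k c u) (hq : q ≠ 0) (hc : c ≠ 0) {a x : ℂ}
    (ha : a ≠ 0) (hx : qCong q x a) (h0 : u a = 0) (h1 : deriv u a ≠ 0) : deriv u x ≠ 0 := by
  refine ((iff_of_qCong (p := fun z ↦ u z = 0 ∧ deriv u z ≠ 0) hq (fun z hz ↦ ?_) ha hx).2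
    ⟨h0, h1⟩).2
  by_cases hz0 : u z = 0
  · simp [hz0, (hu.apply_mul_eq_zero_iff hc hz).2 hz0, hu.deriv_mul_eq_zero_iff hq hc hz hz0]
  · simp [hz0, hu.apply_mul_eq_zero_iff hc hz]

theorem apply_pow_mul (hu : IsQTheta q 0 c u) (hq : q ≠ 0) {x : ℂ} (hx : x ≠ 0) (n : ℕ) :
    u (q ^ n * x) = c ^ n * u x := by
  induction n with
  | zero => simp
  | succ n ih =>
    have := hu.pow_mul_apply _ (mul_ne_zero (pow_ne_zero n hq) hx)
    rw [pow_zero, one_mul, ← mul_assoc, ← pow_succ', ih] at this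
    rw [this, pow_succ']
    ring

theorem comp_inv (hu : IsQTheta q 0 c u) (hq : q ≠ 0) (hc : c ≠ 0) :
    IsQTheta q 0 c⁻¹ fun x ↦ u x⁻¹ where
  differentiableOn := hu.differentiableOn.comp (differentiableOn_inv.mono fun _ hx ↦ hx)
    fun _ hx ↦ inv_ne_zero hx
  pow_mul_apply x hx := by
    have := hu.pow_mul_apply _ (inv_ne_zero (mul_ne_zero hq hx))
    rw [show q * (q * x)⁻¹ = x⁻¹ by field_simp, pow_zero, one_mul] at this
    rw [pow_zero, one_mul, this, inv_mul_cancel_left₀ hc]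

theorem exists_bound (hu : IsQTheta q 0 c u) (hq : q ≠ 0) (hq1 : ‖q‖ < 1) (hc : ‖c‖ ≤ 1) :
    ∃ A, ∀ y, y ≠ 0 → ‖y‖ ≤ 1 → ‖u y‖ ≤ A := by
  set K := Metric.closedBall (0 : ℂ) 1 \ Metric.ball 0 ‖q‖
  have hK0 : K ⊆ {0}ᶜ := fun y hy h ↦
    hy.2 (by rw [mem_singleton_iff.1 h]; exact Metric.mem_ball_self (norm_pos_iff.2 hq))
  obtain ⟨A, hA⟩ := ((isCompact_closedBall _ _).diff Metric.isOpen_ball)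
    |>.exists_bound_of_continuousOn (hu.differentiableOn.continuousOn.mono hK0)
  refine ⟨A, fun y hy hy1 ↦ ?_⟩
  obtain ⟨n, hn, hn'⟩ := exists_nat_pow_near_of_lt_one (norm_pos_iff.2 hy) hy1
    (norm_pos_iff.2 hq) hq1
  have hqn : (0 : ℝ) < ‖q‖ ^ n := pow_pos (norm_pos_iff.2 hq) n
  have hw : y / q ^ n ∈ K := by
    simp only [K, Set.mem_sdiff, mem_closedBall_zero_iff, mem_ball_zero_iff, norm_div, norm_pow,
      not_lt]
    constructor
    · rwa [div_le_one hqn]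
    · rw [le_div_iff₀ hqn, ← pow_succ']
      exact hn.le
  have hy' : y = q ^ n * (y / q ^ n) := by field_simp
  rw [hy', hu.apply_pow_mul hq (hK0 hw), norm_mul, norm_pow]
  exact (mul_le_of_le_one_left (norm_nonneg _) (pow_le_one₀ (norm_nonneg c) hc)).trans (hA _ hw)

/-- `u` is bounded on the punctured unit disc, so it extends holomorphically to `0`, where its
zeros `q ^ n z` accumulate; hence `u = 0` near `0`, and everywhere by the functional equation. -/
theorem eqOn_zero_of_norm_le_one (hu : IsQTheta q 0 c u) (hq : q ≠ 0) (hq1 : ‖q‖ < 1)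
    (hc0 : c ≠ 0) (hc : ‖c‖ ≤ 1) {z : ℂ} (hz : z ≠ 0) (huz : u z = 0) : EqOn u 0 {0}ᶜ := by
  obtain ⟨A, hA⟩ := hu.exists_bound hq hq1 hc
  set U := Function.update u 0 (limUnder (𝓝[≠] 0) u)
  have hU : AnalyticAt ℂ U 0 := by
    refine (Complex.differentiableOn_update_limUnder_of_bddAbove (Metric.ball_mem_nhds 0 one_pos)
      (hu.differentiableOn.mono fun y hy ↦ hy.2) ⟨A, ?_⟩).analyticAt
      (Metric.ball_mem_nhds 0 one_pos)
    rintro _ ⟨y, ⟨hy1, hy0⟩, rfl⟩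
    exact hA y hy0 (mem_ball_zero_iff.1 hy1).le
  have htend : ∀ y : ℂ, y ≠ 0 → Tendsto (fun n : ℕ ↦ q ^ n * y) atTop (𝓝[≠] 0) := fun y hy ↦
    tendsto_nhdsWithin_of_tendsto_nhds_of_eventually_within _
      (by simpa using (tendsto_pow_atTop_nhds_zero_of_norm_lt_one hq1).mul_const y)
      (.of_forall fun n ↦ mul_ne_zero (pow_ne_zero n hq) hy)
  have hUq : ∀ y : ℂ, y ≠ 0 → ∀ n : ℕ, U (q ^ n * y) = c ^ n * u y := fun y hy n ↦ by
    simp only [U]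
    rw [Function.update_of_ne (mul_ne_zero (pow_ne_zero n hq) hy), hu.apply_pow_mul hq hy]
  have hU0 : ∀ᶠ y in 𝓝 0, U y = 0 := hU.frequently_zero_iff_eventually_zero.1 <|
    (htend z hz).frequently (.of_forall fun n ↦ by simp [hUq z hz, huz])
  intro x hx
  obtain ⟨n, hn⟩ := ((htend x hx).eventually (hU0.filter_mono nhdsWithin_le_nhds)).exists
  rw [hUq x hx] at hn
  exact (mul_eq_zero_iff_left (pow_ne_zero n hc0)).1 hn

/-- When `‖c‖ > 1`, pass to `x ↦ u x⁻¹`. -/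
theorem eqOn_zero_of_apply_eq_zero (hu : IsQTheta q 0 c u) (hq : q ≠ 0) (hq1 : ‖q‖ < 1)
    (hc : c ≠ 0) {z : ℂ} (hz : z ≠ 0) (huz : u z = 0) : EqOn u 0 {0}ᶜ := by
  rcases le_or_gt ‖c‖ 1 with hc1 | hc1
  · exact hu.eqOn_zero_of_norm_le_one hq hq1 hc hc1 hz huz
  · intro x hx
    have := (hu.comp_inv hq hc).eqOn_zero_of_norm_le_one hq hq1 (inv_ne_zero hc)
      (by rw [norm_inv]; exact inv_le_one_of_one_le₀ hc1.le) (inv_ne_zero hz) (by simpa using huz)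
      (inv_ne_zero hx : x⁻¹ ∈ ({0}ᶜ : Set ℂ))
    simpa using this

end IsQTheta

/-- The `q`-Pochhammer symbol `(y; q)_∞`. -/
noncomputable def qPochhammer (q y : ℂ) : ℂ := ∏' n : ℕ, (1 - q ^ n * y)

section qPochhammer

variable {q : ℂ}

theorem summable_norm_neg_pow_mul (hq1 : ‖q‖ < 1) (y : ℂ) :
    Summable fun n : ℕ ↦ ‖-(q ^ n * y)‖ := by
  simpa [norm_neg, norm_mul, norm_pow] using
    (summable_geometric_of_lt_one (norm_nonneg q) hq1).mul_right ‖y‖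

theorem multipliable_one_sub_pow_mul (hq1 : ‖q‖ < 1) (y : ℂ) :
    Multipliable fun n : ℕ ↦ 1 - q ^ n * y := by
  simpa only [← sub_eq_add_neg] using
    multipliable_one_add_of_summable (summable_norm_neg_pow_mul hq1 y)

theorem qPochhammer_eq_mul (hq1 : ‖q‖ < 1) (y : ℂ) :
    qPochhammer q y = (1 - y) * qPochhammer q (q * y) := by
  have h : Multipliable fun n : ℕ ↦ 1 - q ^ (n + 1) * y := by
    simpa only [pow_succ, mul_assoc] using multipliable_one_sub_pow_mul hq1 (q * y)
  rw [qPochhammer, tprod_eq_zero_mul' (f := fun n ↦ 1 - q ^ n * y) h, qPochhammer]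
  simp only [pow_zero, one_mul, pow_succ, mul_assoc]

theorem qPochhammer_eq_zero_iff (hq1 : ‖q‖ < 1) {y : ℂ} :
    qPochhammer q y = 0 ↔ ∃ n : ℕ, q ^ n * y = 1 := by
  refine ⟨fun h ↦ ?_, fun ⟨n, hn⟩ ↦ tprod_of_exists_eq_zero ⟨n, by rw [hn, sub_self]⟩⟩
  by_contra! hy
  refine tprod_one_add_ne_zero_of_summable (f := fun n ↦ -(q ^ n * y)) (fun n ↦ ?_)
    (summable_norm_neg_pow_mul hq1 y) (by simpa only [← sub_eq_add_neg, qPochhammer] using h)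
  rw [← sub_eq_add_neg, sub_ne_zero]
  exact (hy n).symm

theorem qPochhammer_self_ne_zero (hq1 : ‖q‖ < 1) : qPochhammer q q ≠ 0 := by
  rw [Ne, qPochhammer_eq_zero_iff hq1]
  rintro ⟨n, hn⟩
  have := congrArg norm hn
  rw [← pow_succ, norm_pow, norm_one] at this
  exact (pow_lt_one₀ (norm_nonneg q) hq1 n.succ_ne_zero).ne this

theorem differentiable_qPochhammer (hq1 : ‖q‖ < 1) : Differentiable ℂ (qPochhammer q) := by
  intro y₀
  set R := ‖y₀‖ + 1
  have hprod : HasProdLocallyUniformlyOn (fun n y ↦ 1 + -(q ^ n * y))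
      (fun y ↦ ∏' n, (1 + -(q ^ n * y))) (Metric.ball 0 R) :=
    Summable.hasProdLocallyUniformlyOn_nat_one_add Metric.isOpen_ball
      ((summable_geometric_of_lt_one (norm_nonneg q) hq1).mul_right R)
      (.of_forall fun n y hy ↦ by
        rw [norm_neg, norm_mul, norm_pow]
        exact mul_le_mul_of_nonneg_left (mem_ball_zero_iff.1 hy).le (by positivity))
      (fun n ↦ by fun_prop)
  have hdiff := hprod.differentiableOn (.of_forall fun s ↦ by
    simpa [Finset.prod_fn] using DifferentiableOn.finsetProd fun n _ ↦ by fun_prop)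
    Metric.isOpen_ball
  simp only [← sub_eq_add_neg] at hdiff
  exact hdiff.differentiableAt (Metric.isOpen_ball.mem_nhds (by simp [R]))

end qPochhammer

/-- `qTheta q a x = (x/a; q)_∞ (qa/x; q)_∞`. -/
noncomputable def qTheta (q a x : ℂ) : ℂ := qPochhammer q (x / a) * qPochhammer q (q * a / x)

section qTheta

variable {q a : ℂ}

theorem isQTheta_qTheta (hq : q ≠ 0) (hq1 : ‖q‖ < 1) (ha : a ≠ 0) :
    IsQTheta q 1 (-a) (qTheta q a) where
  differentiableOn x hx := by
    have hP := differentiable_qPochhammer hq1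
    refine (((hP _).comp x (differentiableAt_id.div_const a)).mul ((hP _).comp x ?_))
      |>.differentiableWithinAt
    exact (differentiableAt_const _).div differentiableAt_id hx
  pow_mul_apply x hx := by
    simp only [qTheta, pow_one, mul_div_assoc]
    rw [show q * (a / (q * x)) = a / x by field_simp, qPochhammer_eq_mul hq1 (x / a),
      qPochhammer_eq_mul hq1 (a / x)]
    field_simp
    ring

theorem qTheta_self (hq1 : ‖q‖ < 1) (ha : a ≠ 0) : qTheta q a a = 0 := by
  rw [qTheta, qPochhammer_eq_mul hq1, div_self ha, sub_self, zero_mul, zero_mul]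

theorem qTheta_eq_zero_iff (hq : q ≠ 0) (hq1 : ‖q‖ < 1) (ha : a ≠ 0) {x : ℂ} (hx : x ≠ 0) :
    qTheta q a x = 0 ↔ qCong q x a := by
  refine ⟨fun h ↦ ?_, fun h ↦
    (isQTheta_qTheta hq hq1 ha).apply_eq_zero_of_qCong hq (neg_ne_zero.2 ha) ha h
      (qTheta_self hq1 ha)⟩
  rcases mul_eq_zero.1 h with h | h <;> obtain ⟨n, hn⟩ := (qPochhammer_eq_zero_iff hq1).1 h
  · refine ⟨-n, ?_⟩
    rw [_root_.zpow_neg, zpow_natCast]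
    field_simp at hn ⊢
    linear_combination hn
  · refine ⟨n + 1, ?_⟩
    rw [zpow_add_one₀ hq, zpow_natCast]
    field_simp at hn
    linear_combination -hn

theorem deriv_qTheta_self_ne_zero (hq1 : ‖q‖ < 1) (ha : a ≠ 0) : deriv (qTheta q a) a ≠ 0 := by
  have hP := differentiable_qPochhammer hq1
  set g : ℂ → ℂ := fun x ↦ qPochhammer q (q * (x / a)) * qPochhammer q (q * a / x)
  have hθ : qTheta q a = fun x ↦ (1 - x / a) * g x := by
    funext x
    rw [qTheta, qPochhammer_eq_mul hq1, mul_assoc]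
  have hg : DifferentiableAt ℂ g a :=
    ((hP _).comp a ((differentiableAt_id.div_const a).const_mul q)).mul
      ((hP _).comp a ((differentiableAt_const _).div differentiableAt_id ha))
  have h1 : HasDerivAt (fun x : ℂ ↦ 1 - x / a) (-(1 / a)) a := by
    simpa using ((hasDerivAt_id a).div_const a).const_sub 1
  rw [hθ, (h1.fun_mul hg.hasDerivAt).deriv, div_self ha, sub_self, zero_mul, add_zero]
  simp only [g, div_self ha, mul_one, mul_div_assoc]
  exact mul_ne_zero (neg_ne_zero.2 (one_div_ne_zero ha))
    (mul_ne_zero (qPochhammer_self_ne_zero hq1) (qPochhammer_self_ne_zero hq1))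

theorem deriv_qTheta_ne_zero (hq : q ≠ 0) (hq1 : ‖q‖ < 1) (ha : a ≠ 0) {x : ℂ} (hx : x ≠ 0)
    (h : qTheta q a x = 0) : deriv (qTheta q a) x ≠ 0 :=
  (isQTheta_qTheta hq hq1 ha).deriv_ne_zero_of_qCong hq (neg_ne_zero.2 ha) ha
    ((qTheta_eq_zero_iff hq hq1 ha hx).1 h) (qTheta_self hq1 ha) (deriv_qTheta_self_ne_zero hq1 ha)

end qTheta

/-- The holomorphic extension of `u / θ` when the zeros of `θ` are simple and are zeros of `u`. -/
noncomputable def extDiv (u θ : ℂ → ℂ) (y : ℂ) : ℂ :=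
  if θ y = 0 then deriv u y / deriv θ y else u y / θ y

section extDiv

variable {u θ : ℂ → ℂ} {y z : ℂ}

theorem extDiv_of_ne_zero (h : θ y ≠ 0) : extDiv u θ y = u y / θ y := if_neg h

theorem extDiv_of_eq_zero (h : θ y = 0) : extDiv u θ y = deriv u y / deriv θ y := if_pos h

theorem mul_extDiv (h : θ y = 0 → u y = 0) : θ y * extDiv u θ y = u y := by
  by_cases hθ : θ y = 0
  · rw [hθ, zero_mul, h hθ]
  · rw [extDiv_of_ne_zero hθ, mul_div_cancel₀ _ hθ]

theorem extDiv_eventuallyEq (hθ : ContinuousAt θ z) (hz : θ z ≠ 0) :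
    extDiv u θ =ᶠ[𝓝 z] fun y ↦ u y / θ y :=
  (hθ.eventually_ne hz).mono fun _ ↦ extDiv_of_ne_zero

/-- At a common zero, `u / θ = dslope u z / dslope θ z` near `z`. -/
theorem differentiableAt_extDiv {s : Set ℂ} (hs : s ∈ 𝓝 z) (hu : DifferentiableOn ℂ u s)
    (hθ : DifferentiableOn ℂ θ s) (h : θ z = 0 → u z = 0 ∧ deriv θ z ≠ 0) :
    DifferentiableAt ℂ (extDiv u θ) z := by
  by_cases hθz : θ z = 0
  · obtain ⟨huz, hθ'⟩ := h hθz
    have hne : ∀ᶠ y in 𝓝[≠] z, θ y ≠ 0 :=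
      ((hθ.differentiableAt hs).hasDerivAt).eventually_ne hθ'
    have hev : extDiv u θ =ᶠ[𝓝 z] fun y ↦ dslope u z y / dslope θ z y := by
      rw [EventuallyEq, ← nhdsNE_sup_pure z, eventually_sup, eventually_pure]
      refine ⟨(hne.and self_mem_nhdsWithin).mono fun y ⟨hy, hyz⟩ ↦ ?_, ?_⟩
      · rw [extDiv_of_ne_zero hy, dslope_of_ne _ hyz, dslope_of_ne _ hyz, slope_def_field,
          slope_def_field, huz, hθz, sub_zero, sub_zero,
          div_div_div_cancel_right₀ (sub_ne_zero.2 hyz)]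
      · rw [extDiv_of_eq_zero hθz, dslope_same, dslope_same]
    refine hev.differentiableAt_iff.2 (DifferentiableAt.div ?_ ?_ (by rwa [dslope_same]))
    · exact ((Complex.differentiableOn_dslope hs).2 hu).differentiableAt hs
    · exact ((Complex.differentiableOn_dslope hs).2 hθ).differentiableAt hs
  · have hθd := hθ.differentiableAt hs
    exact (extDiv_eventuallyEq hθd.continuousAt hθz).differentiableAt_iff.2
      ((hu.differentiableAt hs).div hθd hθz)

theorem deriv_extDiv_eq_zero (hu : DifferentiableAt ℂ u z) (hθ : DifferentiableAt ℂ θ z)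
    (hz : θ z ≠ 0) (h0 : u z = 0) (h1 : deriv u z = 0) : deriv (extDiv u θ) z = 0 := by
  rw [(extDiv_eventuallyEq hθ.continuousAt hz).deriv_eq, deriv_fun_div hu hθ hz, h0, h1]
  simp

end extDiv

namespace IsQTheta

variable {q c d : ℂ} {k l : ℕ} {u θ : ℂ → ℂ}

theorem extDiv (hu : IsQTheta q (k + l) c u) (hθ : IsQTheta q l d θ) (hq : q ≠ 0) (hd : d ≠ 0)
    (hzeros : ∀ x, x ≠ 0 → θ x = 0 → u x = 0 ∧ deriv θ x ≠ 0) :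
    IsQTheta q k (c / d) (extDiv u θ) where
  differentiableOn x hx :=
    (differentiableAt_extDiv (isOpen_compl_singleton.mem_nhds hx) hu.differentiableOn
      hθ.differentiableOn (hzeros x hx)).differentiableWithinAt
  pow_mul_apply x hx := by
    have hqx : q * x ≠ 0 := mul_ne_zero hq hx
    have hu' := hu.pow_mul_apply x hx
    have hθ' := hθ.pow_mul_apply x hx
    by_cases hθx : θ x = 0
    · have hθqx : θ (q * x) = 0 := (hθ.apply_mul_eq_zero_iff hd hx).2 hθx
      obtain ⟨hux, hdθx⟩ := hzeros x hx hθx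
      have hdθqx := (hzeros _ hqx hθqx).2
      have hdu := hu.pow_mul_deriv hq hx hux
      have hdθ := hθ.pow_mul_deriv hq hx hθx
      rw [extDiv_of_eq_zero hθx, extDiv_of_eq_zero hθqx, mul_div_assoc', div_mul_div_comm,
        div_eq_div_iff hdθqx (mul_ne_zero hd hdθx)]
      linear_combination deriv θ (q * x) * hdu - x ^ k * deriv u (q * x) * hdθ
    · have hθqx : θ (q * x) ≠ 0 := by rwa [Ne, hθ.apply_mul_eq_zero_iff hd hx]
      rw [extDiv_of_ne_zero hθx, extDiv_of_ne_zero hθqx, mul_div_assoc', div_mul_div_comm,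
        div_eq_div_iff hθqx (mul_ne_zero hd hθx)]
      linear_combination θ (q * x) * hu' - x ^ k * u (q * x) * hθ'

end IsQTheta

theorem qTheta_ne_zero {q a x : ℂ} (hq : q ≠ 0) (hq1 : ‖q‖ < 1) (ha : a ≠ 0) (hx : x ≠ 0)
    (h : ¬ qCong q x a) : qTheta q a x ≠ 0 :=
  mt (qTheta_eq_zero_iff hq hq1 ha hx).1 h

theorem extDiv_qTheta_eq_zero {q a y : ℂ} {u : ℂ → ℂ} (hq : q ≠ 0) (hq1 : ‖q‖ < 1) (ha : a ≠ 0)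
    (hy : y ≠ 0) (h : ¬ qCong q y a) (huy : u y = 0) : extDiv u (qTheta q a) y = 0 := by
  rw [extDiv_of_ne_zero (qTheta_ne_zero hq hq1 ha hy h), huy, zero_div]

namespace IsQTheta

variable {q c a : ℂ} {k : ℕ} {u : ℂ → ℂ}

theorem extDiv_qTheta (hu : IsQTheta q (k + 1) c u) (hq : q ≠ 0) (hq1 : ‖q‖ < 1) (hc : c ≠ 0)
    (ha : a ≠ 0) (hua : u a = 0) : IsQTheta q k (c / -a) (_root_.extDiv u (qTheta q a)) :=
  hu.extDiv (isQTheta_qTheta hq hq1 ha) hq (neg_ne_zero.2 ha) fun _ hx hθx ↦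
    ⟨hu.apply_eq_zero_of_qCong hq hc ha ((qTheta_eq_zero_iff hq hq1 ha hx).1 hθx) hua,
      deriv_qTheta_ne_zero hq hq1 ha hx hθx⟩

theorem eqOn_zero_of_extDiv_qTheta (hu : IsQTheta q k c u) (hq : q ≠ 0) (hq1 : ‖q‖ < 1)
    (hc : c ≠ 0) (ha : a ≠ 0) (hua : u a = 0)
    (hv : EqOn (_root_.extDiv u (qTheta q a)) 0 {0}ᶜ) :
    EqOn u 0 {0}ᶜ := fun x hx ↦ by
  rw [← mul_extDiv (θ := qTheta q a) fun hθx ↦ hu.apply_eq_zero_of_qCong hq hc ha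
    ((qTheta_eq_zero_iff hq hq1 ha hx).1 hθx) hua, hv hx, Pi.zero_apply, mul_zero]

theorem eqOn_zero_of_two_zeros (hu : IsQTheta q 1 c u) (hq : q ≠ 0) (hq1 : ‖q‖ < 1) (hc : c ≠ 0)
    {z₁ z₂ : ℂ} (hz₁ : z₁ ≠ 0) (hz₂ : z₂ ≠ 0) (h₁₂ : ¬ qCong q z₂ z₁) (h₁ : u z₁ = 0)
    (h₂ : u z₂ = 0) : EqOn u 0 {0}ᶜ :=
  hu.eqOn_zero_of_extDiv_qTheta hq hq1 hc hz₁ h₁ <|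
    (hu.extDiv_qTheta (k := 0) hq hq1 hc hz₁ h₁).eqOn_zero_of_apply_eq_zero hq hq1
      (div_ne_zero hc (neg_ne_zero.2 hz₁)) hz₂ (extDiv_qTheta_eq_zero hq hq1 hz₁ hz₂ h₁₂ h₂)

/-- Dividing by `qTheta q a` for `a ∈ zs` keeps the double zero at `z`; in degree one, dividing by
`qTheta q z` leaves a function of degree zero vanishing at `z`. -/
theorem eqOn_zero_of_double_zero (hq : q ≠ 0) (hq1 : ‖q‖ < 1) {z : ℂ} (hz : z ≠ 0) (zs : List ℂ)
    (hu : IsQTheta q (zs.length + 1) c u) (hc : c ≠ 0) (h₀ : u z = 0) (h₁ : deriv u z = 0)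
    (hzs : ∀ a ∈ zs, a ≠ 0 ∧ u a = 0 ∧ ¬ qCong q z a)
    (hpair : zs.Pairwise fun a b ↦ ¬ qCong q b a) : EqOn u 0 {0}ᶜ := by
  induction zs generalizing c u with
  | nil =>
    refine hu.eqOn_zero_of_extDiv_qTheta hq hq1 hc hz h₀ <|
      (hu.extDiv_qTheta (k := 0) hq hq1 hc hz h₀).eqOn_zero_of_apply_eq_zero hq hq1
        (div_ne_zero hc (neg_ne_zero.2 hz)) hz ?_
    rw [extDiv_of_eq_zero (qTheta_self hq1 hz), h₁, zero_div]
  | cons a zs ih =>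
    obtain ⟨ha, hua, hza⟩ := hzs a List.mem_cons_self
    have hθz := qTheta_ne_zero hq hq1 ha hz hza
    refine hu.eqOn_zero_of_extDiv_qTheta hq hq1 hc ha hua <|
      ih (hu.extDiv_qTheta hq hq1 hc ha hua) (div_ne_zero hc (neg_ne_zero.2 ha))
        (extDiv_qTheta_eq_zero hq hq1 ha hz hza h₀)
        (deriv_extDiv_eq_zero (hu.differentiableAt hz)
          ((isQTheta_qTheta hq hq1 ha).differentiableAt hz) hθz h₀ h₁)
        (fun b hb ↦ ?_) (List.pairwise_cons.1 hpair).2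
    obtain ⟨hb0, hub, hzb⟩ := hzs b (List.mem_cons_of_mem a hb)
    exact ⟨hb0, extDiv_qTheta_eq_zero hq hq1 ha hb0 ((List.pairwise_cons.1 hpair).1 b hb) hub, hzb⟩

end IsQTheta

section Matrices

variable {q : ℂ}

theorem MatHolo.differentiableOn {A : ℂ → Matrix (Fin 2) (Fin 2) ℂ} (hA : MatHolo A) (i j : Fin 2) :
    DifferentiableOn ℂ (fun x ↦ A x i j) {0}ᶜ :=
  fun x hx ↦ (hA i j x hx).differentiableWithinAt

theorem isQTheta_det {m : ℕ} {A : ℂ → Matrix (Fin 2) (Fin 2) ℂ} {R S : Matrix (Fin 2) (Fin 2) ℂ}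
    (hA : MatHolo A) (hS : S.det ≠ 0) (hfe : ∀ x, x ≠ 0 → x ^ m • (A (q * x) * S) = R * A x) :
    IsQTheta q (2 * m) (R.det / S.det) fun x ↦ (A x).det where
  differentiableOn := by
    simp only [Matrix.det_fin_two]
    exact ((hA.differentiableOn 0 0).mul (hA.differentiableOn 1 1)).sub
      ((hA.differentiableOn 0 1).mul (hA.differentiableOn 1 0))
  pow_mul_apply x hx := by
    have h := congrArg Matrix.det (hfe x hx)
    rw [Matrix.det_smul, Matrix.det_mul, Matrix.det_mul, Fintype.card_fin] at h
    rw [div_mul_eq_mul_div, eq_div_iff hS, pow_mul']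
    linear_combination h

theorem MatHolo.deriv_det_eq_zero {A : ℂ → Matrix (Fin 2) (Fin 2) ℂ} (hA : MatHolo A) {z : ℂ}
    (hz : z ≠ 0) (h : A z = 0) : deriv (fun x ↦ (A x).det) z = 0 := by
  have e : ∀ i j, A z i j = 0 := fun i j ↦ by rw [h, Matrix.zero_apply]
  simp only [Matrix.det_fin_two]
  rw [deriv_fun_sub ((hA 0 0 z hz).fun_mul (hA 1 1 z hz)) ((hA 0 1 z hz).fun_mul (hA 1 0 z hz)),
    deriv_fun_mul (hA 0 0 z hz) (hA 1 1 z hz), deriv_fun_mul (hA 0 1 z hz) (hA 1 0 z hz)]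
  simp [e]

/-- The determinant of a matrix vanishing at `z` has a double zero there. -/
theorem MatHolo.apply_ne_zero {c : ℂ} {A : ℂ → Matrix (Fin 2) (Fin 2) ℂ} (hA : MatHolo A)
    (hq : q ≠ 0) (hq1 : ‖q‖ < 1) {z : ℂ} (hz : z ≠ 0) (zs : List ℂ)
    (hdet : IsQTheta q (zs.length + 1) c fun x ↦ (A x).det) (hc : c ≠ 0) (hAz : (A z).det = 0)
    (hzs : ∀ a ∈ zs, a ≠ 0 ∧ (A a).det = 0 ∧ ¬ qCong q z a)
    (hpair : zs.Pairwise fun a b ↦ ¬ qCong q b a) {x : ℂ} (hx : x ≠ 0) (hAx : (A x).det ≠ 0) :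
    A z ≠ 0 := fun h ↦
  hAx (IsQTheta.eqOn_zero_of_double_zero hq hq1 hz zs hdet hc hAz (hA.deriv_det_eq_zero hz h) hzs
    hpair hx)

theorem apply_ne_zero_of_mem_FJS {ρ σv : Fin 2 → ℂ} {xs : Fin 4 → ℂ}
    {M : ℂ → Matrix (Fin 2) (Fin 2) ℂ} (hM : M ∈ FJS q ρ σv xs) (hq : q ≠ 0) (hq1 : ‖q‖ < 1)
    (hρ : ∀ i, ρ i ≠ 0) (hσ : ∀ i, σv i ≠ 0) (hxs : ∀ k, xs k ≠ 0)
    (hNR : ∀ k l : Fin 4, k ≠ l → ¬ qCong q (xs k) (xs l)) (i : Fin 4) : M (xs i) ≠ 0 := by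
  obtain ⟨hMh, hfe, ⟨x, hx, hMx⟩, hzeros⟩ := hM
  have hnodup := (List.nodup_finRange 4).erase i
  have hdet : IsQTheta q ((((List.finRange 4).erase i).map xs).length + 1)
      ((Matrix.diagonal ρ).det / (Matrix.diagonal σv).det) fun x ↦ (M x).det := by
    rw [List.length_map, List.length_erase_of_mem (List.mem_finRange i), List.length_finRange]
    exact isQTheta_det (m := 2) hMh (by simp [Fin.prod_univ_two, hσ]) hfe
  refine hMh.apply_ne_zero hq hq1 (hxs i) _ hdet (by simp [Fin.prod_univ_two, hρ, hσ])
    (hzeros i) (fun a ha ↦ ?_) (List.pairwise_map.2 (hnodup.imp fun h ↦ hNR _ _ (Ne.symm h))) hx hMx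
  obtain ⟨j, hj, rfl⟩ := List.mem_map.1 ha
  exact ⟨hxs j, hzeros j,
    hNR i j (Ne.symm ((List.Nodup.mem_erase_iff (List.nodup_finRange 4)).1 hj).1)⟩

end Matrices

/-- Cayley–Hamilton for `2 × 2` matrices, with the characteristic polynomial split as
`(X - c₁)(X - c₂)`. -/
theorem Matrix.exists_mul_sub_smul_one_eq (C : Matrix (Fin 2) (Fin 2) ℂ) :
    ∃ c₁ c₂ : ℂ, c₁ * c₂ = C.det ∧ C * (C - c₂ • 1) = c₁ • (C - c₂ • 1) := by
  obtain ⟨s, hs⟩ := IsAlgClosed.exists_pow_nat_eq (C.trace ^ 2 - 4 * C.det) two_pos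
  have hprod : (C.trace + s) / 2 * ((C.trace - s) / 2) = C.det := by linear_combination -hs / 4
  refine ⟨(C.trace + s) / 2, (C.trace - s) / 2, hprod, ?_⟩
  rw [Matrix.det_fin_two, Matrix.trace_fin_two] at hprod
  ext i j
  fin_cases i <;> fin_cases j <;>
    simp only [Matrix.trace_fin_two, Fin.zero_eta, Fin.mk_one, Fin.isValue, Matrix.mul_apply,
      Fin.sum_univ_two, Matrix.sub_apply, Matrix.smul_apply, smul_eq_mul, Matrix.one_apply_eq,
      Matrix.one_apply_ne, ne_eq, zero_ne_one, one_ne_zero, not_false_eq_true, mul_one, mul_zero,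
      sub_zero]
  · linear_combination hprod
  · ring
  · ring
  · linear_combination hprod

section Rows

variable {q ρ : ℂ}

theorem eqOn_zero_of_two_zeros_of_smul {ι : Type*} {c : ℂ} {g : ℂ → ι → ℂ} (hq : q ≠ 0)
    (hq1 : ‖q‖ < 1) (hc : c ≠ 0) (hρ : ρ ≠ 0) (hg : ∀ j, DifferentiableOn ℂ (g · j) {0}ᶜ)
    (hfe : ∀ x, x ≠ 0 → x • c • g (q * x) = ρ • g x) {z₁ z₂ : ℂ} (hz₁ : z₁ ≠ 0) (hz₂ : z₂ ≠ 0)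
    (h₁₂ : ¬ qCong q z₂ z₁) (h₁ : g z₁ = 0) (h₂ : g z₂ = 0) : EqOn g 0 {0}ᶜ := fun x hx ↦ by
  funext j
  have hj : IsQTheta q 1 (ρ / c) (g · j) := by
    refine ⟨hg j, fun y hy ↦ ?_⟩
    have := congrFun (hfe y hy) j
    simp only [Pi.smul_apply, smul_eq_mul] at this
    rw [div_mul_eq_mul_div, eq_div_iff hc, ← this]
    ring
  exact hj.eqOn_zero_of_two_zeros hq hq1 (div_ne_zero hρ hc) hz₁ hz₂ h₁₂ (congrFun h₁ j)
    (congrFun h₂ j) hx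

/-- `r (C - c₂)` solves the scalar equation for the eigenvalue `c₁`, hence vanishes; so
`r C = c₂ r`, and `r` solves the scalar equation for `c₂`. -/
theorem eqOn_zero_of_two_zeros_of_vecMul {C : Matrix (Fin 2) (Fin 2) ℂ} {r : ℂ → Fin 2 → ℂ}
    (hq : q ≠ 0) (hq1 : ‖q‖ < 1) (hC : C.det ≠ 0) (hρ : ρ ≠ 0)
    (hr : ∀ j, DifferentiableOn ℂ (r · j) {0}ᶜ) (hfe : ∀ x, x ≠ 0 → x • (r (q * x) ᵥ* C) = ρ • r x)
    {z₁ z₂ : ℂ} (hz₁ : z₁ ≠ 0) (hz₂ : z₂ ≠ 0) (h₁₂ : ¬ qCong q z₂ z₁) (h₁ : r z₁ = 0)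
    (h₂ : r z₂ = 0) : EqOn r 0 {0}ᶜ := by
  obtain ⟨c₁, c₂, hdet, hCN⟩ := C.exists_mul_sub_smul_one_eq
  rw [← hdet] at hC
  set N := C - c₂ • (1 : Matrix (Fin 2) (Fin 2) ℂ)
  have hN : EqOn (r · ᵥ* N) 0 {0}ᶜ := by
    refine eqOn_zero_of_two_zeros_of_smul hq hq1 (left_ne_zero_of_mul hC) hρ (fun j ↦ ?_)
      (fun x hx ↦ ?_) hz₁ hz₂ h₁₂ (by simp [h₁]) (by simp [h₂])
    · simp only [Matrix.vecMul, dotProduct]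
      exact DifferentiableOn.fun_sum fun i _ ↦ (hr i).mul_const _
    · rw [← Matrix.vecMul_smul, ← hCN, ← Matrix.vecMul_vecMul, ← Matrix.smul_vecMul, hfe x hx,
        Matrix.smul_vecMul]
  have hrC : ∀ x, x ≠ 0 → r x ᵥ* C = c₂ • r x := fun x hx ↦ by
    have : r x ᵥ* N = 0 := hN hx
    rwa [Matrix.vecMul_sub, Matrix.vecMul_smul, Matrix.vecMul_one, sub_eq_zero] at this
  exact eqOn_zero_of_two_zeros_of_smul hq hq1 (right_ne_zero_of_mul hC) hρ hr
    (fun x hx ↦ by rw [← hrC _ (mul_ne_zero hq hx), hfe x hx]) hz₁ hz₂ h₁₂ h₁ h₂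

end Rows

section Columns

variable {R : Type*} [CommRing R] {A : Matrix (Fin 2) (Fin 2) R}

theorem Matrix.col_cross_eq_of_det_eq_zero (hA : A.det = 0) (j k : Fin 2) :
    A 0 j * A 1 k = A 1 j * A 0 k := by
  rw [Matrix.det_fin_two] at hA
  fin_cases j <;> fin_cases k <;> simp only [Fin.zero_eta, Fin.mk_one, Fin.isValue]
  · ring
  · linear_combination hA
  · linear_combination -hA
  · ring

theorem Matrix.mul_col_cross_eq_of_det_eq_zero (hA : A.det = 0) (B : Matrix (Fin 2) (Fin 2) R)
    (j k : Fin 2) : (A * B) 0 k * A 1 j = (A * B) 1 k * A 0 j := by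
  simp only [Matrix.mul_apply, Fin.sum_univ_two]
  linear_combination B 0 k * Matrix.col_cross_eq_of_det_eq_zero hA 0 j +
    B 1 k * Matrix.col_cross_eq_of_det_eq_zero hA 1 j

theorem Matrix.row_eq_zero_of_det_eq_zero [IsDomain R] (hA : A.det = 0) {i i' j : Fin 2}
    (hii' : i ≠ i') (h₀ : A i j = 0) (h₁ : A i' j ≠ 0) : A i = 0 := by
  funext k
  have := Matrix.col_cross_eq_of_det_eq_zero hA j k
  fin_cases i <;> fin_cases i' <;> simp_all

end Columns

namespace IsNzCol

variable {A : Matrix (Fin 2) (Fin 2) ℂ} {p r : ℂ}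

theorem not_eq_zero (h : IsNzCol A p r) : ¬(p = 0 ∧ r = 0) :=
  let ⟨_, _, _, h⟩ := h
  h

theorem mul_cross_eq (hA : A.det = 0) (h : IsNzCol A p r) {B : Matrix (Fin 2) (Fin 2) ℂ} {f g : ℂ}
    (hfg : IsNzCol (A * B) f g) : f * r = g * p := by
  obtain ⟨j, rfl, rfl, -⟩ := h
  obtain ⟨k, rfl, rfl, -⟩ := hfg
  exact Matrix.mul_col_cross_eq_of_det_eq_zero hA B j k

theorem row_zero_eq_zero (hA : A.det = 0) (h : IsNzCol A p r) (hp : p = 0) : A 0 = 0 := by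
  obtain ⟨j, rfl, rfl, h⟩ := h
  exact Matrix.row_eq_zero_of_det_eq_zero hA zero_ne_one hp (h ⟨hp, ·⟩)

theorem row_one_eq_zero (hA : A.det = 0) (h : IsNzCol A p r) (hr : r = 0) : A 1 = 0 := by
  obtain ⟨j, rfl, rfl, h⟩ := h
  exact Matrix.row_eq_zero_of_det_eq_zero hA one_ne_zero hr (h ⟨·, hr⟩)

end IsNzCol

namespace Mano

variable {q : ℂ} {ρ : Fin 2 → ℂ} {x1 x2 : ℂ} {M P Q : ℂ → Matrix (Fin 2) (Fin 2) ℂ}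
  {C : Matrix (Fin 2) (Fin 2) ℂ}

theorem swap (hP : Mano q ρ x1 x2 M C P Q) : Mano q ρ x2 x1 M C P Q :=
  let ⟨hC, hPh, hQh, hPQ, hfe, hdet, h1, h2⟩ := hP
  ⟨hC, hPh, hQh, hPQ, hfe, hdet, h2, h1⟩

theorem apply_ne_zero (hP : Mano q ρ x1 x2 M C P Q) (hq : q ≠ 0) (hq1 : ‖q‖ < 1)
    (hρ : ∀ i, ρ i ≠ 0) (hx1 : x1 ≠ 0) (hx2 : x2 ≠ 0) (h12 : ¬ qCong q x1 x2) : P x1 ≠ 0 := by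
  obtain ⟨hC, hPh, -, -, hfe, ⟨x, hx, hPx⟩, h1, h2⟩ := hP
  have hdet := isQTheta_det (m := 1) hPh hC.ne_zero fun x hx ↦ by simpa using hfe x hx
  exact hPh.apply_ne_zero hq hq1 hx1 [x2] hdet (by simp [Fin.prod_univ_two, hρ, hC.ne_zero]) h1
    (by simp [h2, hx2, h12]) (List.pairwise_singleton _ _) hx hPx

theorem not_row_eq_zero (hP : Mano q ρ x1 x2 M C P Q) (hq : q ≠ 0) (hq1 : ‖q‖ < 1)
    (hρ : ∀ i, ρ i ≠ 0) (hx1 : x1 ≠ 0) (hx2 : x2 ≠ 0) (h12 : ¬ qCong q x2 x1) (i : Fin 2) :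
    ¬ (P x1 i = 0 ∧ P x2 i = 0) := by
  rintro ⟨h1, h2⟩
  obtain ⟨hC, hPh, -, -, hfe, ⟨x, hx, hPx⟩, -, -⟩ := hP
  have hrow : ∀ y, y ≠ 0 → y • (P (q * y) i ᵥ* C) = ρ i • P y i := fun y hy ↦ by
    funext j
    have := congrFun₂ (hfe y hy) i j
    rw [Matrix.smul_apply, Matrix.diagonal_mul] at this
    simpa [Matrix.mul_apply, Matrix.vecMul, dotProduct] using this
  have := eqOn_zero_of_two_zeros_of_vecMul (r := (P · i)) hq hq1 hC.ne_zero (hρ i)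
    (hPh.differentiableOn i) hrow hx1 hx2 h12 h1 h2 hx
  exact hPx (Matrix.det_eq_zero_of_row_eq_zero i (congrFun this))

end Mano

theorem stmt16_general (q : ℂ) (hq0 : 0 < ‖q‖) (hq1 : ‖q‖ < 1)
    (ρ σv : Fin 2 → ℂ) (xs : Fin 4 → ℂ)
    (hρ0 : ∀ i, ρ i ≠ 0) (hσ0 : ∀ i, σv i ≠ 0) (hx0 : ∀ k, xs k ≠ 0)
    (hNRx : ∀ k l : Fin 4, k ≠ l → ¬ qCong q (xs k) (xs l))
    (M : ℂ → Matrix (Fin 2) (Fin 2) ℂ) (hM : M ∈ FJS q ρ σv xs)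
    (C : Matrix (Fin 2) (Fin 2) ℂ) (P Q : ℂ → Matrix (Fin 2) (Fin 2) ℂ)
    (hMano : Mano q ρ (xs 0) (xs 1) M C P Q) :
    M (xs 0) ≠ 0 ∧ M (xs 1) ≠ 0 ∧ P (xs 0) ≠ 0 ∧ P (xs 1) ≠ 0 ∧
    ∀ p1 q1 p2 q2 f1 g1 f2 g2 : ℂ,
      IsNzCol (P (xs 0)) p1 q1 → IsNzCol (P (xs 1)) p2 q2 →
      IsNzCol (M (xs 0)) f1 g1 → IsNzCol (M (xs 1)) f2 g2 →
      ¬(p1 * q2 = 0 ∧ p2 * q1 = 0) ∧ p1 * q2 * (f2 * g1) = f1 * g2 * (p2 * q1) := by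
  have hq := norm_pos_iff.1 hq0
  have hx10 := hNRx 1 0 (by decide)
  refine ⟨apply_ne_zero_of_mem_FJS hM hq hq1 hρ0 hσ0 hx0 hNRx 0,
    apply_ne_zero_of_mem_FJS hM hq hq1 hρ0 hσ0 hx0 hNRx 1,
    hMano.apply_ne_zero hq hq1 hρ0 (hx0 0) (hx0 1) (hNRx 0 1 (by decide)),
    hMano.swap.apply_ne_zero hq hq1 hρ0 (hx0 1) (hx0 0) hx10, ?_⟩
  have hrow := hMano.not_row_eq_zero hq hq1 hρ0 (hx0 0) (hx0 1) hx10
  obtain ⟨-, -, -, hPQ, -, -, hP0, hP1⟩ := hMano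
  intro p1 q1 p2 q2 f1 g1 f2 g2 hpq1 hpq2 hfg1 hfg2
  rw [hPQ _ (hx0 0)] at hfg1
  rw [hPQ _ (hx0 1)] at hfg2
  have e1 := hpq1.mul_cross_eq hP0 hfg1
  have e2 := hpq2.mul_cross_eq hP1 hfg2
  refine ⟨?_, by linear_combination p1 * g1 * e2 - g2 * p2 * e1⟩
  rintro ⟨h12, h21⟩
  rcases mul_eq_zero.1 h12 with hp₁ | hq₂ <;> rcases mul_eq_zero.1 h21 with hp₂ | hq₁
  · exact hrow 0 ⟨hpq1.row_zero_eq_zero hP0 hp₁, hpq2.row_zero_eq_zero hP1 hp₂⟩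
  · exact hpq1.not_eq_zero ⟨hp₁, hq₁⟩
  · exact hpq2.not_eq_zero ⟨hp₂, hq₂⟩
  · exact hrow 1 ⟨hpq1.row_one_eq_zero hP0 hq₁, hpq2.row_one_eq_zero hP1 hq₂⟩

/-- The projective invariants computed from the left Mano factor `P` and from `M` at
`x₁, x₂` coincide. -/
theorem stmt16 (q : ℂ) (hq0 : 0 < ‖q‖) (hq1 : ‖q‖ < 1)
    (ρ σv : Fin 2 → ℂ) (xs : Fin 4 → ℂ)
    (hρ0 : ∀ i, ρ i ≠ 0) (hσ0 : ∀ i, σv i ≠ 0) (hx0 : ∀ k, xs k ≠ 0)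
    (hFR : qCong q (xs 0 * xs 1 * xs 2 * xs 3) (ρ 0 * ρ 1 / (σv 0 * σv 1)))
    (hNRρ : ¬ qCong q (ρ 0) (ρ 1)) (hNRσ : ¬ qCong q (σv 0) (σv 1))
    (hNRx : ∀ k l : Fin 4, k ≠ l → ¬ qCong q (xs k) (xs l))
    (hNS : ∀ i j : Fin 2, ¬ qCong q (ρ i / σv j) (xs 0 * xs 1))
    (M : ℂ → Matrix (Fin 2) (Fin 2) ℂ) (hM : M ∈ FJS q ρ σv xs)
    (C : Matrix (Fin 2) (Fin 2) ℂ) (P Q : ℂ → Matrix (Fin 2) (Fin 2) ℂ)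
    (hMano : Mano q ρ (xs 0) (xs 1) M C P Q) :
    M (xs 0) ≠ 0 ∧ M (xs 1) ≠ 0 ∧ P (xs 0) ≠ 0 ∧ P (xs 1) ≠ 0 ∧
    ∀ p1 q1 p2 q2 f1 g1 f2 g2 : ℂ,
      IsNzCol (P (xs 0)) p1 q1 → IsNzCol (P (xs 1)) p2 q2 →
      IsNzCol (M (xs 0)) f1 g1 → IsNzCol (M (xs 1)) f2 g2 →
      ¬(p1 * q2 = 0 ∧ p2 * q1 = 0) ∧ p1 * q2 * (f2 * g1) = f1 * g2 * (p2 * q1) :=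
  stmt16_general q hq0 hq1 ρ σv xs hρ0 hσ0 hx0 hNRx M hM C P Q hMano
end

section
/- Let M′, M″ ∈ SL₂(ℂ) and let e′, e″ ∈ ℂ ∖ {0} be such that Tr M′ = e′ + e′^{−1} and Tr M″ = e″ + e″^{−1} (so that e′, e′^{−1} and e″, e″^{−1} are the eigenvalues of M′ and M″). Then the pair (M′, M″) is reducible — i.e. there exists a nonzero vector v ∈ ℂ² which is a common eigenvector of M′ and M″ — if and only if Tr(M′M″) = e′e″ + (e′e″)^{−1} or Tr(M′M″) = e′e″^{−1} + e′^{−1}e″. -/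
open Matrix

private lemma key2 (M : Matrix (Fin 2) (Fin 2) ℂ) :
    M * M = M.trace • M - M.det • (1 : Matrix (Fin 2) (Fin 2) ℂ) := by
  rw [Matrix.eta_fin_two M]
  ext i j
  fin_cases i <;> fin_cases j <;>
    simp [Matrix.mul_apply, Matrix.trace_fin_two, Matrix.det_fin_two, Fin.sum_univ_two,
      Matrix.one_apply] <;> ring

private lemma det_comm_formula (A B : Matrix (Fin 2) (Fin 2) ℂ) :
    (A*B - B*A).det = -((A*B).trace^2) + A.trace*B.trace*(A*B).trace
      - A.trace^2 * B.det - B.trace^2 * A.det + 4*A.det*B.det := by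
  rw [Matrix.eta_fin_two A, Matrix.eta_fin_two B]
  simp [Matrix.mul_apply, Matrix.trace_fin_two, Matrix.det_fin_two, Fin.sum_univ_two]
  ring

private lemma swapAC (A B : Matrix (Fin 2) (Fin 2) ℂ) :
    (A*B - B*A)*A + A*(A*B - B*A) = A.trace • (A*B - B*A) := by
  have h1 : (A*B - B*A)*A + A*(A*B - B*A) = (A*A)*B - B*(A*A) := by noncomm_ring
  rw [h1, key2 A]
  simp only [Matrix.sub_mul, Matrix.mul_sub, Matrix.smul_mul, Matrix.mul_smul,
    Matrix.one_mul, Matrix.mul_one, smul_sub]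
  abel

private lemma eig_char (M : Matrix (Fin 2) (Fin 2) ℂ) (v : Fin 2 → ℂ) (hv : v ≠ 0)
    (lam : ℂ) (h : M.mulVec v = lam • v) :
    lam ^ 2 - M.trace * lam + M.det = 0 := by
  have h2 : (M * M).mulVec v = (lam ^ 2) • v := by
    rw [← Matrix.mulVec_mulVec, h, Matrix.mulVec_smul, h, smul_smul, ← pow_two]
  rw [key2, Matrix.sub_mulVec, Matrix.smul_mulVec, Matrix.smul_mulVec,
    Matrix.one_mulVec, h] at h2
  obtain ⟨i, hi⟩ := Function.ne_iff.mp hv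
  have h3 := congrFun h2 i
  simp only [Pi.sub_apply, Pi.smul_apply, smul_eq_mul] at h3
  have h4 : (lam ^ 2 - M.trace * lam + M.det) * v i = 0 := by linear_combination -h3
  rcases mul_eq_zero.mp h4 with h5 | h5
  · exact h5
  · exact absurd h5 hi

private lemma vec2_ne (v : Fin 2 → ℂ) (h0 : v 0 = 0) (h1 : v 1 = 0) : v = 0 := by
  funext i; fin_cases i <;> simpa

private lemma line18 (x y : ℂ) (hxy : ¬(x = 0 ∧ y = 0)) (v w : Fin 2 → ℂ) (hv : v ≠ 0)
    (h1 : x * v 0 + y * v 1 = 0) (h2 : x * w 0 + y * w 1 = 0) : ∃ t : ℂ, w = t • v := by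
  by_cases hy : y = 0
  · have hx : x ≠ 0 := fun hx => hxy ⟨hx, hy⟩
    subst hy
    have hv0 : v 0 = 0 := by
      have := mul_eq_zero.mp (by linear_combination h1 : x * v 0 = 0)
      tauto
    have hw0 : w 0 = 0 := by
      have := mul_eq_zero.mp (by linear_combination h2 : x * w 0 = 0)
      tauto
    have hv1 : v 1 ≠ 0 := fun h => hv (vec2_ne v hv0 h)
    refine ⟨w 1 / v 1, funext fun i => ?_⟩
    fin_cases i <;> simp [hv0, hw0]
    · field_simp
  · have hv0 : v 0 ≠ 0 := by
      intro h
      have hv1 : v 1 = 0 := by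
        have : y * v 1 = 0 := by rw [h] at h1; linear_combination h1
        rcases mul_eq_zero.mp this with h' | h'
        · exact absurd h' hy
        · exact h'
      exact hv (vec2_ne v h hv1)
    refine ⟨w 0 / v 0, funext fun i => ?_⟩
    fin_cases i <;> simp
    · field_simp
    · field_simp
      have key : y * (w 1 * v 0) = y * (w 0 * v 1) := by linear_combination v 0 * h2 - w 0 * h1
      exact mul_left_cancel₀ hy key

private lemma ker_line (C : Matrix (Fin 2) (Fin 2) ℂ) (hC : C ≠ 0) (v w : Fin 2 → ℂ)
    (hv : v ≠ 0) (hCv : C.mulVec v = 0) (hCw : C.mulVec w = 0) : ∃ t : ℂ, w = t • v := by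
  by_cases h0 : C 0 0 = 0 ∧ C 0 1 = 0
  · have hrow : ¬(C 1 0 = 0 ∧ C 1 1 = 0) := by
      rintro ⟨h1, h2⟩
      exact hC (by ext i j; fin_cases i <;> fin_cases j <;> simp [h0.1, h0.2, h1, h2])
    refine line18 (C 1 0) (C 1 1) hrow v w hv ?_ ?_
    · simpa [Matrix.mulVec, dotProduct, Fin.sum_univ_two] using congrFun hCv 1
    · simpa [Matrix.mulVec, dotProduct, Fin.sum_univ_two] using congrFun hCw 1
  · refine line18 (C 0 0) (C 0 1) h0 v w hv ?_ ?_
    · simpa [Matrix.mulVec, dotProduct, Fin.sum_univ_two] using congrFun hCv 0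
    · simpa [Matrix.mulVec, dotProduct, Fin.sum_univ_two] using congrFun hCw 0

private lemma trace_val (t μ : ℂ) (hμ : μ ≠ 0) (h : μ ^ 2 - t * μ + 1 = 0) :
    t = μ + μ⁻¹ := by
  field_simp
  linear_combination -h

private lemma quad_root (t d : ℂ) : ∃ α : ℂ, α ^ 2 - t * α + d = 0 := by
  obtain ⟨s, hs⟩ := IsAlgClosed.exists_pow_nat_eq (t ^ 2 - 4 * d) (n := 2) (by norm_num)
  exact ⟨(t + s) / 2, by linear_combination hs / 4⟩

private lemma eigvec_exists (M : Matrix (Fin 2) (Fin 2) ℂ) :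
    ∃ v : Fin 2 → ℂ, v ≠ 0 ∧ ∃ a : ℂ, M.mulVec v = a • v := by
  obtain ⟨α, hα⟩ := quad_root (M 0 0 + M 1 1) (M 0 0 * M 1 1 - M 0 1 * M 1 0)
  by_cases hb : M 0 1 = 0
  · by_cases hc : M 1 0 = 0
    · refine ⟨![1, 0], fun h => by simpa using congrFun h 0, M 0 0, funext fun i => ?_⟩
      fin_cases i <;> simp [Matrix.mulVec, dotProduct, Fin.sum_univ_two, hc]
    · refine ⟨![α - M 1 1, M 1 0], fun h => hc (by simpa using congrFun h 1), α,
        funext fun i => ?_⟩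
      fin_cases i <;>
        simp [Matrix.mulVec, dotProduct, Fin.sum_univ_two]
      · linear_combination -hα
      · ring
  · refine ⟨![M 0 1, α - M 0 0], fun h => hb (by simpa using congrFun h 0), α,
      funext fun i => ?_⟩
    fin_cases i <;>
      simp [Matrix.mulVec, dotProduct, Fin.sum_univ_two]
    · ring
    · linear_combination -hα

private lemma comm_eig (A B : Matrix (Fin 2) (Fin 2) ℂ) (hAB : A * B = B * A) :
    ∃ v : Fin 2 → ℂ, v ≠ 0 ∧ (∃ a : ℂ, A.mulVec v = a • v) ∧
      (∃ b : ℂ, B.mulVec v = b • v) := by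
  by_cases hb : A 0 1 = 0
  · by_cases hc : A 1 0 = 0
    · by_cases had : A 0 0 = A 1 1
      · obtain ⟨v, hv, b, hBv⟩ := eigvec_exists B
        refine ⟨v, hv, ⟨A 0 0, funext fun i => ?_⟩, ⟨b, hBv⟩⟩
        fin_cases i <;> simp [Matrix.mulVec, dotProduct, Fin.sum_univ_two, hb, hc]
        exact Or.inl had.symm
      · have hq : B 0 1 = 0 := by
          have h01 := congrFun (congrFun hAB 0) 1
          simp [Matrix.mul_apply, Fin.sum_univ_two, hb, hc] at h01
          rcases mul_eq_zero.mp (show (A 0 0 - A 1 1) * B 0 1 = 0 by linear_combination h01)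
            with h | h
          · exact absurd (by linear_combination h) had
          · exact h
        refine ⟨![0, 1], fun h => by simpa using congrFun h 1,
          ⟨A 1 1, funext fun i => ?_⟩, ⟨B 1 1, funext fun i => ?_⟩⟩ <;>
          fin_cases i <;>
            simp [Matrix.mulVec, dotProduct, Fin.sum_univ_two, hb, hc, hq]
    · obtain ⟨α, hα⟩ := quad_root (A 0 0 + A 1 1) (A 0 0 * A 1 1 - A 0 1 * A 1 0)
      have hv : (![α - A 1 1, A 1 0] : Fin 2 → ℂ) ≠ 0 :=
        fun h => hc (by simpa using congrFun h 1)
      have hAv : A.mulVec ![α - A 1 1, A 1 0] = α • ![α - A 1 1, A 1 0] := by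
        funext i
        fin_cases i <;> simp [Matrix.mulVec, dotProduct, Fin.sum_univ_two]
        · linear_combination -hα
        · ring
      have hw : A.mulVec (B.mulVec ![α - A 1 1, A 1 0]) =
          α • (B.mulVec ![α - A 1 1, A 1 0]) := by
        rw [Matrix.mulVec_mulVec, hAB, ← Matrix.mulVec_mulVec, hAv, Matrix.mulVec_smul]
      set w := B.mulVec ![α - A 1 1, A 1 0] with hwdef
      have h1 := congrFun hw 1
      simp [Matrix.mulVec, dotProduct, Fin.sum_univ_two, ← hwdef] at h1
      refine ⟨![α - A 1 1, A 1 0], hv, ⟨α, hAv⟩, ⟨w 1 / A 1 0, funext fun i => ?_⟩⟩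
      fin_cases i
      · show w 0 = w 1 / A 1 0 * (α - A 1 1)
        rw [div_mul_eq_mul_div, eq_div_iff hc]
        linear_combination h1
      · show w 1 = w 1 / A 1 0 * A 1 0
        rw [div_mul_cancel₀ _ hc]
  · obtain ⟨α, hα⟩ := quad_root (A 0 0 + A 1 1) (A 0 0 * A 1 1 - A 0 1 * A 1 0)
    have hv : (![A 0 1, α - A 0 0] : Fin 2 → ℂ) ≠ 0 :=
      fun h => hb (by simpa using congrFun h 0)
    have hAv : A.mulVec ![A 0 1, α - A 0 0] = α • ![A 0 1, α - A 0 0] := by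
      funext i
      fin_cases i <;> simp [Matrix.mulVec, dotProduct, Fin.sum_univ_two]
      · ring
      · linear_combination -hα
    have hw : A.mulVec (B.mulVec ![A 0 1, α - A 0 0]) =
        α • (B.mulVec ![A 0 1, α - A 0 0]) := by
      rw [Matrix.mulVec_mulVec, hAB, ← Matrix.mulVec_mulVec, hAv, Matrix.mulVec_smul]
    set w := B.mulVec ![A 0 1, α - A 0 0] with hwdef
    have h0 := congrFun hw 0
    simp [Matrix.mulVec, dotProduct, Fin.sum_univ_two, ← hwdef] at h0
    refine ⟨![A 0 1, α - A 0 0], hv, ⟨α, hAv⟩, ⟨w 0 / A 0 1, funext fun i => ?_⟩⟩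
    fin_cases i
    · show w 0 = w 0 / A 0 1 * A 0 1
      rw [div_mul_cancel₀ _ hb]
    · show w 1 = w 0 / A 0 1 * (α - A 0 0)
      rw [div_mul_eq_mul_div, eq_div_iff hb]
      linear_combination h0

/-- Reducibility criterion for a pair of `SL₂(ℂ)` matrices in terms of the trace of the
product. -/
theorem stmt18 (M' M'' : Matrix (Fin 2) (Fin 2) ℂ)
    (hM' : M'.det = 1) (hM'' : M''.det = 1)
    (e' e'' : ℂ) (he' : e' ≠ 0) (he'' : e'' ≠ 0)
    (htr' : M'.trace = e' + e'⁻¹) (htr'' : M''.trace = e'' + e''⁻¹) :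
    (∃ v : Fin 2 → ℂ, v ≠ 0 ∧ (∃ a : ℂ, M'.mulVec v = a • v) ∧
        (∃ b : ℂ, M''.mulVec v = b • v)) ↔
    ((M' * M'').trace = e' * e'' + (e' * e'')⁻¹ ∨
      (M' * M'').trace = e' * e''⁻¹ + e'⁻¹ * e'') := by
  constructor
  · rintro ⟨v, hv, ⟨a, ha⟩, ⟨b, hb⟩⟩
    have ha' := eig_char M' v hv a ha
    rw [hM', htr'] at ha'
    have hb' := eig_char M'' v hv b hb
    rw [hM'', htr''] at hb'
    have he1 : e' * e'⁻¹ = 1 := mul_inv_cancel₀ he'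
    have he2 : e'' * e''⁻¹ = 1 := mul_inv_cancel₀ he''
    have haf : (a - e') * (a - e'⁻¹) = 0 := by linear_combination ha' + he1
    have hbf : (b - e'') * (b - e''⁻¹) = 0 := by linear_combination hb' + he2
    have hprod : (M' * M'').mulVec v = (a * b) • v := by
      rw [← Matrix.mulVec_mulVec, hb, Matrix.mulVec_smul, ha, smul_smul, mul_comm]
    have hd : (M' * M'').det = 1 := by rw [Matrix.det_mul, hM', hM'', one_mul]
    have h2 := eig_char (M' * M'') v hv (a * b) hprod
    rw [hd] at h2
    have ha0 : a ≠ 0 := by intro h0; rw [h0] at ha'; simp at ha'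
    have hb0 : b ≠ 0 := by intro h0; rw [h0] at hb'; simp at hb'
    have htv := trace_val ((M' * M'').trace) (a * b) (mul_ne_zero ha0 hb0) h2
    rcases mul_eq_zero.mp haf with h | h <;> rcases mul_eq_zero.mp hbf with h' | h' <;>
      rw [sub_eq_zero] at h h' <;> rw [h, h'] at htv
    · exact Or.inl htv
    · rw [mul_inv, inv_inv] at htv
      exact Or.inr htv
    · rw [mul_inv, inv_inv] at htv
      exact Or.inr (by linear_combination htv)
    · rw [mul_inv, inv_inv, inv_inv] at htv
      refine Or.inl ?_
      rw [mul_inv]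
      linear_combination htv
  · intro h
    set C := M' * M'' - M'' * M' with hC
    have hdet : C.det = 0 := by
      rw [hC, det_comm_formula, hM', hM'', htr', htr'']
      have he1 : e' * e'⁻¹ = 1 := mul_inv_cancel₀ he'
      have he2 : e'' * e''⁻¹ = 1 := mul_inv_cancel₀ he''
      rcases h with h | h
      · rw [h, mul_inv]
        linear_combination (e'' ^ 2 + (e''⁻¹) ^ 2 - 2) * he1 + (e' ^ 2 + (e'⁻¹) ^ 2 - 2) * he2
      · rw [h]
        linear_combination (e'' ^ 2 + (e''⁻¹) ^ 2 - 2) * he1 + (e' ^ 2 + (e'⁻¹) ^ 2 - 2) * he2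
    by_cases hC0 : C = 0
    · refine comm_eig M' M'' ?_
      have := sub_eq_zero.mp (hC ▸ hC0)
      exact this
    · obtain ⟨v, hv, hCv⟩ := (Matrix.exists_mulVec_eq_zero_iff).mpr hdet
      have h1 : C * M' = M'.trace • C - M' * C := by
        rw [hC]
        exact eq_sub_of_add_eq (swapAC M' M'')
      have h2 : C * M'' = M''.trace • C - M'' * C := by
        have h3 := swapAC M'' M'
        have h4 : M'' * M' - M' * M'' = -C := by rw [hC, neg_sub]
        rw [h4, Matrix.neg_mul, Matrix.mul_neg, smul_neg, ← neg_add] at h3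
        have h5 := neg_injective h3
        exact eq_sub_of_add_eq h5
      have hAv : C.mulVec (M'.mulVec v) = 0 := by
        rw [Matrix.mulVec_mulVec, h1, Matrix.sub_mulVec, Matrix.smul_mulVec, hCv,
          ← Matrix.mulVec_mulVec, hCv, Matrix.mulVec_zero, smul_zero, sub_zero]
      have hBv : C.mulVec (M''.mulVec v) = 0 := by
        rw [Matrix.mulVec_mulVec, h2, Matrix.sub_mulVec, Matrix.smul_mulVec, hCv,
          ← Matrix.mulVec_mulVec, hCv, Matrix.mulVec_zero, smul_zero, sub_zero]
      obtain ⟨α, hα⟩ := ker_line C hC0 v (M'.mulVec v) hv hCv hAv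
      obtain ⟨β, hβ⟩ := ker_line C hC0 v (M''.mulVec v) hv hCv hBv
      exact ⟨v, hv, ⟨α, hα⟩, ⟨β, hβ⟩⟩
end
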